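/- arXiv:1208.2768 — 3 statements merged into one kernel-verified Lean document; each statement's English description precedes it below -/
import Mathlib

section
/- For every word w over {a,b}, the cellular automaton transduction model can copy its input in real time: formally, the relation {(w, ww) : w ∈ {a,b}⁺} is realized by a cellular automaton transducer with input-acceptance time n and output-completion time n. -/
/-! Cellular automaton transducers (CAT). -/

/-- A cellular automaton transducer over input alphabet `A` and output alphabet `B`.
`S` is the finite set of cell states, `accept` the accepting states, `embed` views
input symbols as states, and `δ left self right = (new state, output)` where the
output component `none` means no output (`⊥`) and `some v` means the word `v` is emitted. -/
structure CAT (A B : Type) where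
  S : Type
  fin : Fintype S
  accept : Set S
  embed : A → S
  δ : Option S → S → Option S → S × Option (List B)

/-- Left neighbour (boundary `#` is `none`). -/
def nbL {σ : Type} {n : ℕ} (c : Fin n → σ) (i : Fin n) : Option σ :=
  if 0 < i.val then some (c ⟨i.val - 1, Nat.lt_of_le_of_lt (Nat.sub_le _ _) i.isLt⟩) else none

/-- Right neighbour (boundary `#` is `none`). -/
def nbR {σ : Type} {n : ℕ} (c : Fin n → σ) (i : Fin n) : Option σ :=
  if h : i.val + 1 < n then some (c ⟨i.val + 1, h⟩) else none

/-- The configuration (cell states and output registers) of `M` on input `w` at time `t`. -/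
def CATconf {A B : Type} (M : CAT A B) (w : List A) :
    ℕ → (Fin w.length → M.S) × (Fin w.length → Option (List B))
  | 0 => (fun i => M.embed (w.get i), fun _ => none)
  | t+1 =>
    let p := CATconf M w t
    (fun i => (M.δ (nbL p.1 i) (p.1 i) (nbR p.1 i)).1,
     fun i => match p.2 i with
       | some v => some v
       | none => (M.δ (nbL p.1 i) (p.1 i) (nbR p.1 i)).2)

/-- The input `w` is accepted within `tb` steps: the leftmost cell enters an accepting state. -/
def CATAcceptsBy {A B : Type} (M : CAT A B) (w : List A) (tb : ℕ) : Prop :=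
  ∃ t ≤ tb, ∃ h : 0 < w.length, (CATconf M w t).1 ⟨0, h⟩ ∈ M.accept

/-- By time `tb` every cell has emitted an output and the concatenation is `v`. -/
def CATOutputsBy {A B : Type} (M : CAT A B) (w : List A) (v : List B) (tb : ℕ) : Prop :=
  (∀ i, ((CATconf M w tb).2 i).isSome = true) ∧
  v = (List.ofFn (fun i => ((CATconf M w tb).2 i).getD [])).flatten

/-- The transduction realized by `M`. -/
def CATTransduction {A B : Type} (M : CAT A B) : Set (List A × List B) :=
  {p | (∃ t, CATAcceptsBy M p.1 t) ∧ ∃ t, CATOutputsBy M p.1 p.2 t}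

/-- `M` has time complexity `(t_i, t_o)`. -/
def CATTimeBounded {A B : Type} (M : CAT A B) (t_i t_o : ℕ → ℕ) : Prop :=
  ∀ p ∈ CATTransduction M,
    CATAcceptsBy M p.1 (t_i p.1.length) ∧ CATOutputsBy M p.1 p.2 (t_o p.1.length)

/-- The family of transductions computed by CATs whose input time satisfies `Ti`
and output time satisfies `To`. -/
def CATT (A B : Type) (Ti To : (ℕ → ℕ) → Prop) : Set (Set (List A × List B)) :=
  {T | ∃ M : CAT A B, ∃ t_i t_o, Ti t_i ∧ To t_o ∧ T = CATTransduction M ∧ CATTimeBounded M t_i t_o}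

/-- Real time for CATs: `t(n) = n`. -/
def rtC : (ℕ → ℕ) → Prop := fun t => t = id

/-- Linear time: `t(n) = k·n` for some rational `k ≥ 1`. -/
def lin : (ℕ → ℕ) → Prop := fun t => ∃ k : ℚ, 1 ≤ k ∧ ∀ n, t n = ⌈k * n⌉₊

/-! ### The copy CAT -/

/-- The copy machine: each state carries a leftward-moving stream (first component)
and a rightward-moving stream (second component) of input symbols. -/
def Mcopy : CAT Bool Bool where
  S := Option Bool × Option Bool
  fin := inferInstance
  accept := Set.univ
  embed a := (some a, some a)
  δ l s r :=
    ((r.bind Prod.fst, l.bind Prod.snd),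
      if s.2.isSome ∧ (l.bind Prod.snd) = none then
        some [s.1.getD false, (r.bind Prod.fst).getD (s.2.getD false)]
      else if s.1.isSome ∧ (r.bind Prod.fst) = none ∧ ((l.bind Prod.snd)).isSome then
        some [(l.bind Prod.snd).getD false, s.2.getD false]
      else none)

lemma conf_snd_some {A B : Type} (M : CAT A B) (w : List A) (t : ℕ) (i : Fin w.length)
    (v : List B) (h : (CATconf M w t).2 i = some v) : (CATconf M w (t+1)).2 i = some v := by
  rw [CATconf]; simp only [h]

lemma conf_snd_none {A B : Type} (M : CAT A B) (w : List A) (t : ℕ) (i : Fin w.length)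
    (h : (CATconf M w t).2 i = none) :
    (CATconf M w (t+1)).2 i
      = (M.δ (nbL (CATconf M w t).1 i) ((CATconf M w t).1 i) (nbR (CATconf M w t).1 i)).2 := by
  rw [CATconf]; simp only [h]

lemma Mcopy_fst (w : List Bool) : ∀ (t : ℕ) (i : Fin w.length),
    ((CATconf Mcopy w t).1 i).1
      = if i.val + t < w.length then some (w.getD (i.val + t) false) else none := by
  intro t
  induction t with
  | zero =>
    intro i
    rw [if_pos (by simpa using i.isLt)]
    show some (w.get i) = _
    rw [List.getD_eq_getElem _ _ (by simpa using i.isLt)]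
    simp [List.get_eq_getElem]
  | succ t ih =>
    intro i
    have h1 : ((CATconf Mcopy w (t+1)).1 i).1
        = (nbR (CATconf Mcopy w t).1 i).bind Prod.fst := rfl
    rw [h1]
    unfold nbR
    by_cases h : i.val + 1 < w.length
    · rw [dif_pos h]
      have hih : ((CATconf Mcopy w t).1 ⟨i.val + 1, h⟩).1
          = if i.val + 1 + t < w.length then some (w.getD (i.val + 1 + t) false) else none :=
        ih ⟨i.val + 1, h⟩
      show ((CATconf Mcopy w t).1 ⟨i.val + 1, h⟩).1 = _
      rw [hih]
      by_cases h2 : i.val + 1 + t < w.length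
      · rw [if_pos h2, if_pos (by omega)]
        congr 2
        omega
      · rw [if_neg h2, if_neg (by omega)]
    · rw [dif_neg h, if_neg (by omega)]
      rfl

lemma Mcopy_snd (w : List Bool) : ∀ (t : ℕ) (i : Fin w.length),
    ((CATconf Mcopy w t).1 i).2
      = if t ≤ i.val then some (w.getD (i.val - t) false) else none := by
  intro t
  induction t with
  | zero =>
    intro i
    rw [if_pos (Nat.zero_le _)]
    show some (w.get i) = _
    rw [List.getD_eq_getElem _ _ (by simpa using i.isLt)]
    simp [List.get_eq_getElem]
  | succ t ih =>
    intro i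
    have h1 : ((CATconf Mcopy w (t+1)).1 i).2
        = (nbL (CATconf Mcopy w t).1 i).bind Prod.snd := rfl
    rw [h1]
    unfold nbL
    by_cases h : 0 < i.val
    · rw [if_pos h]
      have hih : ((CATconf Mcopy w t).1 ⟨i.val - 1,
            Nat.lt_of_le_of_lt (Nat.sub_le _ _) i.isLt⟩).2
          = if t ≤ i.val - 1 then some (w.getD (i.val - 1 - t) false) else none :=
        ih ⟨i.val - 1, Nat.lt_of_le_of_lt (Nat.sub_le _ _) i.isLt⟩
      show ((CATconf Mcopy w t).1 ⟨i.val - 1, _⟩).2 = _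
      rw [hih]
      by_cases h2 : t ≤ i.val - 1
      · rw [if_pos h2, if_pos (by omega)]
        congr 2
        omega
      · rw [if_neg h2, if_neg (by omega)]
    · rw [if_neg h, if_neg (by omega)]
      rfl

/-- The word output by cell `i`. -/
def Oout (w : List Bool) (i : ℕ) : List Bool :=
  [(w ++ w).getD (2*i) false, (w ++ w).getD (2*i + 1) false]

lemma Mcopy_out (w : List Bool) : ∀ (t : ℕ) (i : Fin w.length),
    (CATconf Mcopy w t).2 i
      = if min (i.val + 1) (w.length - i.val) ≤ t then some (Oout w i.val) else none := by
  intro t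
  induction t with
  | zero =>
    intro i
    have := i.isLt
    rw [if_neg (by omega)]
    rfl
  | succ t ih =>
    intro i
    have hlt := i.isLt
    by_cases hd : min (i.val + 1) (w.length - i.val) ≤ t
    · rw [conf_snd_some Mcopy w t i _ (by rw [ih i, if_pos hd]), if_pos (by omega)]
    · rw [conf_snd_none Mcopy w t i (by rw [ih i, if_neg hd])]
      have hnewL : (nbR (CATconf Mcopy w t).1 i).bind Prod.fst
          = if i.val + (t+1) < w.length then some (w.getD (i.val + (t+1)) false) else none := by
        have h1 : ((CATconf Mcopy w (t+1)).1 i).1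
            = (nbR (CATconf Mcopy w t).1 i).bind Prod.fst := rfl
        rw [← h1, Mcopy_fst]
      have hnewR : (nbL (CATconf Mcopy w t).1 i).bind Prod.snd
          = if t + 1 ≤ i.val then some (w.getD (i.val - (t+1)) false) else none := by
        have h1 : ((CATconf Mcopy w (t+1)).1 i).2
            = (nbL (CATconf Mcopy w t).1 i).bind Prod.snd := rfl
        rw [← h1, Mcopy_snd]
      have hs1 := Mcopy_fst w t i
      have hs2 := Mcopy_snd w t i
      show (if (((CATconf Mcopy w t).1 i).2.isSome = true
              ∧ ((nbL (CATconf Mcopy w t).1 i).bind Prod.snd) = none) then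
          some [((CATconf Mcopy w t).1 i).1.getD false,
            ((nbR (CATconf Mcopy w t).1 i).bind Prod.fst).getD
              (((CATconf Mcopy w t).1 i).2.getD false)]
        else if (((CATconf Mcopy w t).1 i).1.isSome = true
              ∧ ((nbR (CATconf Mcopy w t).1 i).bind Prod.fst) = none
              ∧ ((nbL (CATconf Mcopy w t).1 i).bind Prod.snd).isSome = true) then
          some [((nbL (CATconf Mcopy w t).1 i).bind Prod.snd).getD false,
            ((CATconf Mcopy w t).1 i).2.getD false]
        else none)
        = if min (i.val + 1) (w.length - i.val) ≤ t + 1 then some (Oout w i.val) else none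
      rw [hnewL, hnewR, hs1, hs2]
      by_cases hmin : min (i.val + 1) (w.length - i.val) ≤ t + 1
      · rw [if_pos hmin]
        by_cases hA : i.val + 1 ≤ w.length - i.val
        · -- case A/B : t = i, output at time i+1
          have ht : t = i.val := by omega
          rw [if_neg (show ¬ (t + 1 ≤ i.val) by omega),
            if_pos (show t ≤ i.val by omega),
            if_pos (show i.val + t < w.length by omega),
            if_pos (show (some (w.getD (i.val - t) false)).isSome = true
              ∧ (none : Option Bool) = none from ⟨rfl, rfl⟩)]
          simp only [Option.getD_some]
          by_cases hB : i.val + (t + 1) < w.length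
          · rw [if_pos hB]
            simp only [Option.getD_some]
            unfold Oout
            rw [List.getD_append _ _ _ _ (show 2 * i.val < w.length by omega),
              List.getD_append _ _ _ _ (show 2 * i.val + 1 < w.length by omega),
              show i.val + t = 2 * i.val by omega,
              show i.val + (t + 1) = 2 * i.val + 1 by omega]
          · rw [if_neg hB]
            simp only [Option.getD_none, Option.getD_some]
            unfold Oout
            rw [List.getD_append _ _ _ _ (show 2 * i.val < w.length by omega),
              List.getD_append_right _ _ _ _ (show w.length ≤ 2 * i.val + 1 by omega),
              show i.val + t = 2 * i.val by omega,
              show i.val - t = 2 * i.val + 1 - w.length by omega]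
        · -- case C : t + 1 = n - i, L just died, R alive
          have ht : t + 1 = w.length - i.val := by omega
          have h2i : w.length ≤ 2 * i.val := by omega
          rw [if_pos (show t ≤ i.val by omega), if_pos (show t + 1 ≤ i.val by omega),
            if_neg (show ¬ (i.val + (t + 1) < w.length) by omega),
            if_pos (show i.val + t < w.length by omega)]
          rw [if_neg (by simp), if_pos ⟨rfl, rfl, rfl⟩]
          simp only [Option.getD_some]
          unfold Oout
          rw [List.getD_append_right _ _ _ _ (show w.length ≤ 2 * i.val by omega),
            List.getD_append_right _ _ _ _ (show w.length ≤ 2 * i.val + 1 by omega),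
            show i.val - (t + 1) = 2 * i.val - w.length by omega,
            show i.val - t = 2 * i.val + 1 - w.length by omega]
      · rw [if_neg hmin]
        rw [if_pos (show t + 1 ≤ i.val by omega),
          if_pos (show i.val + (t+1) < w.length by omega),
          if_pos (show t ≤ i.val by omega),
          if_pos (show i.val + t < w.length by omega)]
        simp

lemma flatten_pairs (n : ℕ) : ∀ (f : ℕ → Bool),
    (List.ofFn (fun i : Fin n => [f (2 * i.val), f (2 * i.val + 1)])).flatten
      = List.ofFn (fun j : Fin (2 * n) => f j.val) := by
  induction n with
  | zero => intro f; simp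
  | succ n ih =>
    intro f
    have hRHS : List.ofFn (fun j : Fin (2 * (n+1)) => f j.val)
        = f 0 :: f 1 :: List.ofFn (fun j : Fin (2 * n) => f (j.val + 2)) := by
      apply List.ext_getElem
      · simp only [List.length_ofFn, List.length_cons]
        omega
      · intro k h1 h2
        simp only [List.getElem_ofFn]
        match k with
        | 0 => rfl
        | 1 => rfl
        | (k+2) =>
          simp only [List.getElem_cons_succ, List.getElem_ofFn]
    have hfun : (fun i : Fin n => [f (2 * (i.succ).val), f (2 * (i.succ).val + 1)])
        = fun i : Fin n => [f (2 * i.val + 2), f ((2 * i.val + 1) + 2)] := by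
      funext i
      rw [Fin.val_succ, show 2 * (i.val + 1) = 2 * i.val + 2 from by ring,
        show 2 * i.val + 2 + 1 = (2 * i.val + 1) + 2 from by ring]
    rw [List.ofFn_succ, List.flatten_cons, hfun, hRHS,
      show (fun i : Fin n => [f (2 * i.val + 2), f ((2 * i.val + 1) + 2)])
        = fun i : Fin n => [(fun j => f (j + 2)) (2 * i.val), (fun j => f (j + 2)) (2 * i.val + 1)]
        from rfl,
      ih (fun j => f (j + 2))]
    simp

lemma Mcopy_flatten (w : List Bool) (t : ℕ)
    (hall : ∀ i, ((CATconf Mcopy w t).2 i).isSome = true) :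
    (List.ofFn (fun i => ((CATconf Mcopy w t).2 i).getD [])).flatten = w ++ w := by
  have hv : (fun i : Fin w.length => ((CATconf Mcopy w t).2 i).getD [])
      = fun i : Fin w.length => Oout w i.val := by
    funext i
    have h := Mcopy_out w t i
    by_cases hle : min (i.val + 1) (w.length - i.val) ≤ t
    · rw [h, if_pos hle]; rfl
    · exfalso; have := hall i; rw [h, if_neg hle] at this; simp at this
  rw [hv]
  unfold Oout
  rw [flatten_pairs w.length (fun j => (w ++ w).getD j false)]
  apply List.ext_getElem
  · simp
    ring
  · intro k h1 h2
    simp only [List.getElem_ofFn]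
    rw [List.getD_eq_getElem _ _ h2]

lemma Mcopy_outputsBy (w : List Bool) : CATOutputsBy Mcopy w (w ++ w) w.length := by
  have hall : ∀ i, ((CATconf Mcopy w w.length).2 i).isSome = true := by
    intro i
    rw [Mcopy_out w w.length i, if_pos (by have := i.isLt; omega)]
    rfl
  exact ⟨hall, (Mcopy_flatten w w.length hall).symm⟩

/-- the copy transduction `{(w, ww) : w ∈ {a,b}⁺}` is realized by a
cellular automaton transducer in real time (input-acceptance time `n`,
output-completion time `n`). The alphabet `{a,b}` is modelled by `Bool`. -/
theorem copy_transduction_in_CAT_rt_rt :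
    {p : List Bool × List Bool | ∃ w : List Bool, w ≠ [] ∧ p = (w, w ++ w)} ∈
      CATT Bool Bool rtC rtC := by
  refine ⟨Mcopy, id, id, rfl, rfl, ?_, ?_⟩
  · ext p
    constructor
    · rintro ⟨w, hw, rfl⟩
      exact ⟨⟨0, 0, le_refl _, by simpa using List.length_pos_iff.mpr hw, trivial⟩,
        ⟨w.length, Mcopy_outputsBy w⟩⟩
    · rintro ⟨⟨ta, _, _, h0, _⟩, ⟨t, hall, hv⟩⟩
      refine ⟨p.1, by intro h; rw [h] at h0; simp at h0, ?_⟩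
      have hp : p.2 = p.1 ++ p.1 := by rw [hv]; exact Mcopy_flatten p.1 t hall
      exact Prod.ext rfl hp
  · rintro p ⟨⟨ta, _, _, h0, hacc⟩, ⟨t, hall, hv⟩⟩
    constructor
    · exact ⟨0, Nat.zero_le _, h0, trivial⟩
    · have hp : p.2 = p.1 ++ p.1 := by rw [hv]; exact Mcopy_flatten p.1 t hall
      rw [hp]
      exact Mcopy_outputsBy p.1
end

section
/- The sorting transduction {(w, a^{|w|_a} b^{|w|_b}) : w ∈ {a,b}⁺} is realized by a cellular automaton transducer in real time (both input-acceptance and output-completion time equal to the input length n). -/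
/-!
The machine runs the traffic rule 184 on the letters (a `b` followed by an `a` swaps with it),
on the word padded with `a`s on the left and `b`s on the right. Let `H(x, t)` be the number of
`a`s at positions `≥ x` at time `t`, and `k = |w|_a`. The `a`s are conserved and only cross from
`x` to `x - 1`, so `H(0, t) = k`, hence `H(x, t) ≥ k - x`, and
`H(x, t + 1) ≤ H(x + 1, t)` or `H(x, t + 1) ≤ H(x - 1, t) - 1`.
This max-plus recursion gives `2 H(x, t) ≤ max (2 (k - x)) (max (k + n - x - t) 0)`, so cell
`x < k` holds its final letter `a` from time `n - k + x + 1` on, and cell `x ≥ k` its final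
letter `b` from time `n + k - x` on.

Each cell also carries a flag: an `a` becomes settled when its left neighbour is a settled `a`,
a `b` when its right neighbour is a settled `b`, the borders counting as settled. Settled cells
never change again, and by the timing above the settled zones spread from both borders fast
enough to cover every cell by time `n`. A cell emits its letter when it becomes settled, so at
time `n` every cell has emitted, and what it emitted is its letter in the sorted word.
-/

section CellularEvolution

variable {σ τ : Type*}

def cellStep (f : σ → σ → σ → σ) (c : ℤ → σ) : ℤ → σ :=
  fun x => f (c (x - 1)) (c x) (c (x + 1))

def Framed (n : ℕ) (a b : σ) (c : ℤ → σ) : Prop :=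
  (∀ x < 0, c x = a) ∧ ∀ x : ℤ, n ≤ x → c x = b

variable {f : σ → σ → σ → σ} {n : ℕ} {a b : σ} {c : ℤ → σ}

theorem Framed.step (hfa : ∀ y, f a a y = a) (hfb : ∀ y, f y b b = b) (hc : Framed n a b c) :
    Framed n a b (cellStep f c) :=
  ⟨fun x hx => by simp only [cellStep, hc.1 x hx, hc.1 (x - 1) (by omega), hfa],
    fun x hx => by simp only [cellStep, hc.2 x hx, hc.2 (x + 1) (by omega), hfb]⟩

theorem Framed.iterate (hfa : ∀ y, f a a y = a) (hfb : ∀ y, f y b b = b) (hc : Framed n a b c)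
    (t : ℕ) : Framed n a b ((cellStep f)^[t] c) := by
  induction t with
  | zero => exact hc
  | succ t ih => rw [Function.iterate_succ_apply']; exact ih.step hfa hfb

theorem comp_iterate_cellStep {g : τ → τ → τ → τ} (π : σ → τ)
    (h : ∀ x y z, π (f x y z) = g (π x) (π y) (π z)) (t : ℕ) :
    π ∘ (cellStep f)^[t] c = (cellStep g)^[t] (π ∘ c) := by
  have hπ : Function.Semiconj (π ∘ ·) (cellStep f) (cellStep g) := fun _ =>
    funext fun _ => h _ _ _
  exact hπ.iterate_right t c

end CellularEvolution

section Rule184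

/-- Elementary rule 184: a `true` moves one cell to the right when that cell holds `false`. -/
def rule184 (l c r : Bool) : Bool := c && r || l && !c

def holes (n : ℕ) (c : ℤ → Bool) (x : ℤ) : ℕ :=
  ∑ i ∈ Finset.range (n - x).toNat, (!c (x + i)).toNat

variable {n : ℕ} {c : ℤ → Bool}

theorem Framed.iterate_rule184 (hc : Framed n false true c) (t : ℕ) :
    Framed n false true ((cellStep rule184)^[t] c) :=
  hc.iterate (by decide) (by decide) t

theorem holes_le (x : ℤ) : (holes n c x : ℤ) ≤ max (n - x) 0 := by
  have : holes n c x ≤ (n - x).toNat := by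
    simpa [holes] using Finset.sum_le_card_nsmul (Finset.range (n - x).toNat) _ 1
      fun i _ => Bool.toNat_le _
  omega

theorem holes_of_le {x : ℤ} (hx : n ≤ x) : holes n c x = 0 := by
  simp [holes, show (n - x).toNat = 0 by omega]

theorem holes_eq_of_lt {x : ℤ} (hx : x < n) :
    holes n c x = holes n c (x + 1) + (!c x).toNat := by
  rw [holes, holes, show (n - x).toNat = (n - (x + 1)).toNat + 1 by omega,
    Finset.sum_range_succ']
  simp only [add_assoc, Nat.cast_add, Nat.cast_one, Nat.cast_zero, add_zero, add_comm (1 : ℤ)]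

theorem holes_eq (hc : Framed n false true c) (x : ℤ) :
    holes n c x = holes n c (x + 1) + (!c x).toNat := by
  rcases lt_or_ge x n with hx | hx
  · exact holes_eq_of_lt hx
  · simp [holes_of_le hx, holes_of_le (show (n : ℤ) ≤ x + 1 by omega), hc.2 x hx]

theorem holes_antitone : Antitone (holes n c) :=
  antitone_int_of_succ_le fun x => by
    rcases lt_or_ge x n with hx | hx
    · rw [holes_eq_of_lt hx]; omega
    · rw [holes_of_le (by omega)]; omega

theorem holes_add_monotone : Monotone fun x => (holes n c x : ℤ) + x :=
  monotone_int_of_le_succ fun x => by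
    rcases lt_or_ge x n with hx | hx
    · rw [holes_eq_of_lt hx]; have := Bool.toNat_le (!c x); omega
    · rw [holes_of_le hx]; omega

/-- Conservation of `false`s at a cell: what is there after the step, plus what leaves to the left,
equals what was there, plus what arrives from the right. -/
theorem rule184_flow (l c r : Bool) :
    (!rule184 l c r).toNat + (!c && l).toNat = (!c).toNat + (!r && c).toNat := by
  cases l <;> cases c <;> cases r <;> rfl

theorem holes_cellStep_add (hc : Framed n false true c) (x : ℤ) :
    holes n (cellStep rule184 c) x + (!c x && c (x - 1)).toNat = holes n c x := by
  rcases le_or_gt x n with hx | hx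
  · induction x, hx using Int.leInductionDown with
    | base => simp [holes_of_le le_rfl, hc.2 n le_rfl]
    | pred x hx ih =>
      have flow := rule184_flow (c (x - 1 - 1)) (c (x - 1)) (c x)
      rw [holes_eq_of_lt (show x - 1 < n by omega), holes_eq_of_lt (show x - 1 < n by omega),
        sub_add_cancel, ← ih]
      simp only [cellStep, sub_add_cancel] at flow ⊢
      omega
  · simp [holes_of_le hx.le, hc.2 x hx.le]

theorem holes_iterate_zero (hc : Framed n false true c) (t : ℕ) :
    holes n ((cellStep rule184)^[t] c) 0 = holes n c 0 := by
  induction t with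
  | zero => rfl
  | succ t ih =>
    have hct := hc.iterate_rule184 t
    rw [Function.iterate_succ_apply', ← ih, ← holes_cellStep_add hct 0,
      hct.1 (0 - 1) (by omega)]
    simp

theorem holes_cellStep_le (hc : Framed n false true c) (x : ℤ) :
    holes n (cellStep rule184 c) x ≤ holes n c (x + 1) ∨
      holes n (cellStep rule184 c) x + 1 ≤ holes n c (x - 1) := by
  have hstep := holes_cellStep_add hc x
  have hx := holes_eq hc x
  have hx' := holes_eq hc (x - 1)
  rw [sub_add_cancel] at hx'
  rcases hcx : c x <;> rcases hcx' : c (x - 1) <;>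
    simp only [hcx, hcx', Bool.not_true, Bool.not_false, Bool.and_true, Bool.and_false,
      Bool.toNat_true, Bool.toNat_false] at hstep hx hx' <;> omega

theorem two_mul_holes_iterate_le (hc : Framed n false true c) (t : ℕ) (x : ℤ) :
    2 * (holes n ((cellStep rule184)^[t] c) x : ℤ) ≤
      max (2 * (holes n c 0 - x)) (max (holes n c 0 + n - x - t) 0) := by
  induction t generalizing x with
  | zero =>
    have hle := holes_le (n := n) (c := c) x
    rw [Function.iterate_zero_apply]
    rcases le_total x 0 with hx | hx
    · have := holes_add_monotone (n := n) (c := c) hx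
      dsimp only at this
      omega
    · have := holes_antitone (n := n) (c := c) hx
      omega
  | succ t ih =>
    rw [Function.iterate_succ_apply']
    rcases holes_cellStep_le (hc.iterate_rule184 t) x with h | h
    · have := ih (x + 1); omega
    · have := ih (x - 1); omega

theorem iterate_rule184_eq_false (hc : Framed n false true c) {x : ℤ} (hx : 0 ≤ x)
    (hxk : x < holes n c 0) {t : ℕ} (ht : n - holes n c 0 + x + 1 ≤ t) :
    (cellStep rule184)^[t] c x = false := by
  have hlow := holes_add_monotone (n := n) (c := (cellStep rule184)^[t] c) hx
  have hup := two_mul_holes_iterate_le hc t (x + 1)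
  have hstep := holes_eq (hc.iterate_rule184 t) x
  dsimp only at hlow
  rw [holes_iterate_zero hc] at hlow
  cases h : (cellStep rule184)^[t] c x
  · rfl
  · rw [h, Bool.not_true, Bool.toNat_false] at hstep; omega

theorem iterate_rule184_eq_true (hc : Framed n false true c) {x : ℤ}
    (hkx : holes n c 0 ≤ x) {t : ℕ} (ht : n + holes n c 0 - x ≤ t) :
    (cellStep rule184)^[t] c x = true := by
  have hup := two_mul_holes_iterate_le hc t x
  have hstep := holes_eq (hc.iterate_rule184 t) x
  cases h : (cellStep rule184)^[t] c x
  · rw [h, Bool.not_false, Bool.toNat_true] at hstep; omega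
  · rfl

end Rule184

namespace Sorter

/-- A state is a letter together with a flag marking it as settled. -/
def sortRule (l c r : Bool × Bool) : Bool × Bool :=
  let v := rule184 l.1 c.1 r.1
  (v, if v then r.2 && r.1 else l.2 && !l.1)

theorem sortRule_settle_left (c r : Bool × Bool) (h : (sortRule (false, true) c r).1 = false) :
    sortRule (false, true) c r = (false, true) := by
  revert c r; decide

theorem sortRule_settle_right (l c : Bool × Bool) (h : (sortRule l c (true, true)).1 = true) :
    sortRule l c (true, true) = (true, true) := by
  revert l c; decide

theorem sortRule_settled (l c r : Bool × Bool) (h : (sortRule l c r).2 = true) :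
    sortRule l c r = (false, true) ∧ l = (false, true) ∨
      sortRule l c r = (true, true) ∧ r = (true, true) := by
  revert l c r; decide

/-- The border `#` is read as a settled `a` on the left and a settled `b` on the right, so that the
machine is the restriction of `cellStep sortRule` on `ℤ` started from `pad w`. -/
def machine : CAT Bool Bool where
  S := Bool × Bool
  fin := inferInstance
  accept := Set.univ
  embed b := (b, false)
  δ l c r :=
    let c' := sortRule (l.getD (false, true)) c (r.getD (true, true))
    (c', if c'.2 then some [c'.1] else none)

def pad (w : List Bool) (x : ℤ) : Bool × Bool :=
  if x < 0 then (false, true) else (w[x.toNat]?.map (·, false)).getD (true, true)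

def orbit (w : List Bool) (t : ℕ) : ℤ → Bool × Bool := (cellStep sortRule)^[t] (pad w)

def sortedWord (w : List Bool) : List Bool :=
  List.replicate (w.count false) false ++ List.replicate (w.count true) true

theorem pad_natCast (w : List Bool) (i : ℕ) :
    pad w i = (w[i]?.map (·, false)).getD (true, true) := by
  simp [pad]

theorem sum_range_pad :
    ∀ w : List Bool, ∑ i ∈ Finset.range w.length, (!(pad w i).1).toNat = w.count false
  | [] => rfl
  | b :: w => by
    rw [List.length_cons, Finset.sum_range_succ', List.count_cons, ← sum_range_pad w]
    simp only [pad_natCast]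
    cases b <;> simp

variable {w : List Bool}

theorem framed_orbit (t : ℕ) : Framed w.length (false, true) (true, true) (orbit w t) := by
  refine Framed.iterate (fun r => sortRule_settle_left _ r rfl)
    (fun l => sortRule_settle_right l _ rfl) ⟨fun x hx => if_pos hx, fun x hx => ?_⟩ t
  simp [show ¬ x < 0 by omega, show w.length ≤ x.toNat by omega]

theorem orbit_succ (t : ℕ) (x : ℤ) :
    orbit w (t + 1) x = sortRule (orbit w t (x - 1)) (orbit w t x) (orbit w t (x + 1)) := by
  rw [orbit, Function.iterate_succ_apply']; rfl

theorem orbit_fst (t : ℕ) (x : ℤ) :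
    (orbit w t x).1 = (cellStep rule184)^[t] (Prod.fst ∘ pad w) x :=
  congrFun (comp_iterate_cellStep (c := pad w) Prod.fst (fun _ _ _ => rfl) t) x

theorem framed_fst_pad : Framed w.length false true (Prod.fst ∘ pad w) :=
  ⟨fun x hx => congrArg Prod.fst ((framed_orbit 0).1 x hx),
    fun x hx => congrArg Prod.fst ((framed_orbit 0).2 x hx)⟩

theorem holes_fst_pad : holes w.length (Prod.fst ∘ pad w) 0 = w.count false := by
  simpa [holes] using sum_range_pad w

theorem orbit_fst_eq_false {x : ℤ} (hx : 0 ≤ x) (hxk : x < w.count false) {t : ℕ}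
    (ht : w.length - w.count false + x + 1 ≤ t) : (orbit w t x).1 = false := by
  rw [orbit_fst]
  exact iterate_rule184_eq_false framed_fst_pad hx (by rwa [holes_fst_pad])
    (by rwa [holes_fst_pad])

theorem orbit_fst_eq_true {x : ℤ} (hkx : w.count false ≤ x) {t : ℕ}
    (ht : w.length + w.count false - x ≤ t) : (orbit w t x).1 = true := by
  rw [orbit_fst]
  exact iterate_rule184_eq_true framed_fst_pad (by rwa [holes_fst_pad]) (by rwa [holes_fst_pad])

theorem orbit_eq_settled_false {x : ℤ} (hxk : x < w.count false) {t : ℕ}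
    (ht : w.length - w.count false + x + 1 ≤ t) : orbit w t x = (false, true) := by
  rcases lt_or_ge x (-1) with hx | hx
  · exact (framed_orbit t).1 x (by omega)
  induction x, hx using Int.leInduction generalizing t with
  | base => exact (framed_orbit t).1 (-1) (by omega)
  | succ x hx ih =>
    obtain ⟨s, rfl⟩ : ∃ s, t = s + 1 :=
      ⟨t - 1, by have := w.count_le_length (a := false); omega⟩
    have hfst := orbit_fst_eq_false (x := x + 1) (by omega) hxk (t := s + 1) (by push_cast; omega)
    rw [orbit_succ, add_sub_cancel_right, ih (by omega) (by omega)] at hfst ⊢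
    exact sortRule_settle_left _ _ hfst

theorem orbit_eq_settled_true {x : ℤ} (hkx : w.count false ≤ x) {t : ℕ}
    (ht : w.length + w.count false - x ≤ t) : orbit w t x = (true, true) := by
  rcases le_or_gt x w.length with hx | hx
  · induction x, hx using Int.leInductionDown generalizing t with
    | base => exact (framed_orbit t).2 _ le_rfl
    | pred x hx ih =>
      obtain ⟨s, rfl⟩ : ∃ s, t = s + 1 := ⟨t - 1, by omega⟩
      have hfst := orbit_fst_eq_true (x := x - 1) hkx (t := s + 1) (by push_cast; omega)
      rw [orbit_succ, sub_add_cancel, ih (by omega) (by omega)] at hfst ⊢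
      exact sortRule_settle_right _ _ hfst
  · exact (framed_orbit t).2 x hx.le

theorem orbit_of_length_le {t : ℕ} (ht : w.length ≤ t) (x : ℤ) :
    orbit w t x = (decide (w.count false ≤ x), true) := by
  rcases lt_or_ge x (w.count false) with hx | hx
  · rw [orbit_eq_settled_false hx (by omega), decide_eq_false (by omega)]
  · rw [orbit_eq_settled_true hx (by omega), decide_eq_true hx]

theorem orbit_succ_of_settled {t : ℕ} {x : ℤ} (h : (orbit w t x).2 = true) :
    orbit w (t + 1) x = orbit w t x := by
  induction t generalizing x with
  | zero =>
    rcases lt_or_ge x 0 with hx | hx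
    · rw [(framed_orbit 1).1 x hx, (framed_orbit 0).1 x hx]
    · have hx' : w.length ≤ x := by
        by_contra! hx'
        simp [orbit, pad, show ¬ x < 0 by omega, show x.toNat < w.length by omega] at h
      rw [(framed_orbit 1).2 x hx', (framed_orbit 0).2 x hx']
  | succ t ih =>
    rw [orbit_succ] at h
    rw [orbit_succ (t + 1) x]
    rcases sortRule_settled _ _ _ h with ⟨hc, hl⟩ | ⟨hc, hr⟩
    · rw [← orbit_succ] at hc
      rw [hc, ih (x := x - 1) (by rw [hl]), hl]
      exact sortRule_settle_left _ _ rfl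
    · rw [← orbit_succ] at hc
      rw [hc, ih (x := x + 1) (by rw [hr]), hr]
      exact sortRule_settle_right _ _ rfl

theorem orbit_of_settled {t : ℕ} {x : ℤ} (h : (orbit w t x).2 = true) :
    orbit w t x = (decide (w.count false ≤ x), true) := by
  have hstable : ∀ d, orbit w (t + d) x = orbit w t x := by
    intro d
    induction d with
    | zero => rfl
    | succ d ih => rw [← add_assoc, orbit_succ_of_settled (by rwa [ih]), ih]
  rw [← hstable w.length, orbit_of_length_le (by omega)]

theorem CATconf_fst (t : ℕ) (i : Fin w.length) : (CATconf machine w t).1 i = orbit w t i := by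
  induction t generalizing i with
  | zero => simp [CATconf, machine, orbit, pad_natCast]
  | succ t ih =>
    have hL : (nbL (CATconf machine w t).1 i).getD (false, true) = orbit w t (i - 1) := by
      unfold nbL
      split_ifs with hi
      · exact (ih _).trans (congrArg (orbit w t) (by dsimp only; omega))
      · rw [show (i : ℤ) = 0 by omega]; exact ((framed_orbit t).1 (0 - 1) (by omega)).symm
    have hR : (nbR (CATconf machine w t).1 i).getD (true, true) = orbit w t (i + 1) := by
      unfold nbR
      split_ifs with hi
      · exact (ih _).trans (congrArg (orbit w t) (by push_cast; rfl))
      · exact ((framed_orbit t).2 _ (by omega)).symm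
    show sortRule ((nbL (CATconf machine w t).1 i).getD (false, true)) ((CATconf machine w t).1 i)
      ((nbR (CATconf machine w t).1 i).getD (true, true)) = _
    rw [hL, hR, ih, orbit_succ]

theorem CATconf_snd_succ (t : ℕ) (i : Fin w.length) :
    (CATconf machine w (t + 1)).2 i = ((CATconf machine w t).2 i).or
      (if (orbit w (t + 1) i).2 then some [(orbit w (t + 1) i).1] else none) := by
  rw [← CATconf_fst]
  simp only [CATconf]
  cases (CATconf machine w t).2 i <;> rfl

theorem CATconf_snd_eq_none_or (t : ℕ) (i : Fin w.length) :
    (CATconf machine w t).2 i = none ∨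
      (CATconf machine w t).2 i = some [decide (w.count false ≤ (i : ℤ))] := by
  induction t with
  | zero => exact Or.inl rfl
  | succ t ih =>
    rw [CATconf_snd_succ]
    rcases ih with h | h <;> rw [h]
    · split_ifs with hs
      · rw [orbit_of_settled hs]; exact Or.inr rfl
      · exact Or.inl rfl
    · exact Or.inr rfl

theorem CATconf_snd_of_length_le {t : ℕ} (ht : w.length ≤ t) (i : Fin w.length) :
    (CATconf machine w t).2 i = some [decide (w.count false ≤ (i : ℤ))] := by
  obtain ⟨s, rfl⟩ : ∃ s, t = s + 1 := ⟨t - 1, by have := i.pos; omega⟩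
  rw [CATconf_snd_succ, orbit_of_length_le ht, if_pos rfl]
  rcases CATconf_snd_eq_none_or s i with h | h <;> rw [h] <;> rfl

theorem flatten_ofFn_singleton {α : Type*} {n : ℕ} (f : Fin n → α) :
    (List.ofFn fun i => [f i]).flatten = List.ofFn f :=
  (congrArg List.flatten (List.map_ofFn (g := fun a => [a])).symm).trans (List.flatMap_singleton' _)

theorem ofFn_decide_le {k n : ℕ} (hk : k ≤ n) :
    List.ofFn (fun i : Fin n => decide ((k : ℤ) ≤ (i : ℕ))) =
      List.replicate k false ++ List.replicate (n - k) true := by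
  apply List.ext_getElem
  · simp only [List.length_ofFn, List.length_append, List.length_replicate]; omega
  · intro i h _
    simp only [List.getElem_ofFn, List.getElem_append, List.length_replicate,
      List.getElem_replicate, Nat.cast_le]
    grind

theorem output_eq_sortedWord {t : ℕ} (h : ∀ i, ((CATconf machine w t).2 i).isSome) :
    (List.ofFn fun i => ((CATconf machine w t).2 i).getD []).flatten = sortedWord w := by
  have hreg : ∀ i,
      ((CATconf machine w t).2 i).getD [] = [decide (w.count false ≤ (i : ℤ))] := by
    intro i
    rcases CATconf_snd_eq_none_or t i with hi | hi
    · simpa [hi] using h i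
    · rw [hi]; rfl
  simp only [hreg]
  rw [flatten_ofFn_singleton, ofFn_decide_le List.count_le_length,
    ← List.count_false_add_count_true w, Nat.add_sub_cancel_left, sortedWord]

theorem acceptsBy_of_ne_nil (hw : w ≠ []) (t : ℕ) : CATAcceptsBy machine w t :=
  ⟨0, t.zero_le, List.length_pos_iff.2 hw, trivial⟩

theorem outputsBy_length : CATOutputsBy machine w (sortedWord w) w.length := by
  have hsome : ∀ i, ((CATconf machine w w.length).2 i).isSome := fun i => by
    rw [CATconf_snd_of_length_le le_rfl]; rfl
  exact ⟨hsome, (output_eq_sortedWord hsome).symm⟩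

theorem eq_of_outputsBy {v : List Bool} {t : ℕ} (h : CATOutputsBy machine w v t) :
    v = sortedWord w :=
  h.2.trans (output_eq_sortedWord h.1)

theorem transduction_eq :
    CATTransduction machine = {p | ∃ w : List Bool, w ≠ [] ∧ p = (w, sortedWord w)} := by
  ext p
  constructor
  · rintro ⟨⟨_, _, _, hw, _⟩, _, hv⟩
    exact ⟨p.1, List.length_pos_iff.1 hw, Prod.ext rfl (eq_of_outputsBy hv)⟩
  · rintro ⟨w, hw, rfl⟩
    exact ⟨⟨0, acceptsBy_of_ne_nil hw 0⟩, _, outputsBy_length⟩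

theorem timeBounded : CATTimeBounded machine id id := by
  rintro ⟨w, v⟩ ⟨⟨_, _, _, hw, _⟩, _, hv⟩
  rw [eq_of_outputsBy hv]
  exact ⟨acceptsBy_of_ne_nil (List.length_pos_iff.1 hw) _, outputsBy_length⟩

end Sorter

/-- the sorting transduction `{(w, a^{|w|_a} b^{|w|_b}) : w ∈ {a,b}⁺}` is
realized by a cellular automaton transducer in real time. The alphabet `{a,b}` is
modelled by `Bool` with `a = false` and `b = true`. -/
theorem sorting_transduction_in_CAT_rt_rt :
    {p : List Bool × List Bool | ∃ w : List Bool, w ≠ [] ∧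
        p = (w, List.replicate (w.count false) false ++ List.replicate (w.count true) true)} ∈
      CATT Bool Bool rtC rtC :=
  ⟨Sorter.machine, id, id, rfl, rfl, Sorter.transduction_eq.symm, Sorter.timeBounded⟩
end

section
/- The reversal transduction {(w, w^R) : w ∈ {a,b}*} is realized by a cellular automaton transducer in real time, i.e., it belongs to 𝒯(CAT_{rt,rt}). -/
/-!
Three tracks run through the array of `n` cells. The input shifts left by one cell per step;
a copy of it, reflected at the left border, shifts right by one cell per step, so that cell `i`
holds `w[t-1-i]` at time `t > i`; and a signal leaves the right border at time `0`, which cell `i`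
sees at time `n-1-i`. At that moment `w[n-1-2i] = wᴿ[2i]` enters the cell on the reflected track
and `w[n-2-2i] = wᴿ[2i+1]` is already there, so cell `i` emits these two letters. Read from left
to right, the outputs are `wᴿ`, and the last cell to emit is cell `0`, at time `n`.
-/

section Evolution

variable {A B : Type} (M : CAT A B) (w : List A)

theorem CATconf_eq_of_step (st : ℕ → Fin w.length → M.S)
    (reg : ℕ → Fin w.length → Option (List B))
    (st_zero : ∀ i, st 0 i = M.embed (w.get i)) (reg_zero : ∀ i, reg 0 i = none)
    (st_succ : ∀ t i, st (t + 1) i = (M.δ (nbL (st t) i) (st t i) (nbR (st t) i)).1)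
    (reg_succ : ∀ t i,
      reg (t + 1) i = (reg t i).or (M.δ (nbL (st t) i) (st t i) (nbR (st t) i)).2)
    (t : ℕ) : CATconf M w t = (st t, reg t) := by
  induction t with
  | zero => exact Prod.ext (funext fun i => (st_zero i).symm) (funext fun i => (reg_zero i).symm)
  | succ t ih =>
    refine Prod.ext (funext fun i => ?_) (funext fun i => ?_)
    · simp only [CATconf, ih, st_succ]
    · simp only [CATconf, ih, reg_succ]
      cases reg t i <;> rfl

end Evolution

theorem List.take_two_eq {α : Type} (l : List α) : l.take 2 = l[0]?.toList ++ l[1]?.toList := by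
  rcases l with _ | ⟨a, _ | ⟨b, l⟩⟩ <;> rfl

theorem List.flatten_ofFn_pairs {α : Type} (l : List α) (m : ℕ) :
    (List.ofFn fun i : Fin m => l[2 * (i : ℕ)]?.toList ++ l[2 * (i : ℕ) + 1]?.toList).flatten =
      l.take (2 * m) := by
  induction m generalizing l with
  | zero => simp
  | succ m ih =>
    have h := ih (l.drop 2)
    simp only [List.getElem?_drop] at h
    rw [show 2 * (m + 1) = 2 + 2 * m by ring, List.take_add, ← h, List.take_two_eq,
      List.ofFn_succ, List.flatten_cons]
    simp only [Fin.val_zero, Fin.val_succ]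
    congr 3
    funext i
    rw [show 2 * ((i : ℕ) + 1) = 2 + 2 * i by ring, Nat.add_assoc]

/-- A state `(L, R, Q)` holds the input track, the reflected track and the signal. -/
def revCAT : CAT Bool Bool where
  S := Option Bool × Option Bool × Bool
  fin := inferInstance
  accept := Set.univ
  embed b := (some b, none, false)
  δ l s r :=
    let R := l.elim s.1 fun ls => ls.2.1
    let Q := r.elim true fun rs => rs.2.2
    ((r.elim none fun rs => rs.1, R, Q), if Q then some (R.toList ++ s.2.1.toList) else none)

def revState (w : List Bool) (t i : ℕ) : Option Bool × Option Bool × Bool :=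
  (w[i + t]?, if i < t then w[t - 1 - i]? else none, decide (w.length ≤ t + i))

def revOut (w : List Bool) (i : ℕ) : List Bool :=
  w.reverse[2 * i]?.toList ++ w.reverse[2 * i + 1]?.toList

def revRegister (w : List Bool) (t i : ℕ) : Option (List Bool) :=
  if w.length ≤ t + i then some (revOut w i) else none

theorem revCAT_δ (w : List Bool) (t : ℕ) (i : Fin w.length) :
    revCAT.δ (nbL (fun j : Fin w.length => revState w t j) i) (revState w t i)
        (nbR (fun j : Fin w.length => revState w t j) i) =
      (revState w (t + 1) i, if w.length ≤ t + 1 + i then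
        some ((revState w (t + 1) i).2.1.toList ++ (revState w t i).2.1.toList) else none) := by
  have hi := i.isLt
  by_cases hl : 0 < (i : ℕ) <;> by_cases hr : (i : ℕ) + 1 < w.length <;>
    simp [nbL, nbR, hl, hr, revCAT, revState] <;> grind

theorem revOut_eq_of_signal (w : List Bool) (t i : ℕ) (h : w.length = t + 1 + i) :
    revOut w i = (revState w (t + 1) i).2.1.toList ++ (revState w t i).2.1.toList := by
  simp only [revOut, revState]
  congr 2
  · by_cases h2 : 2 * i < w.length
    · rw [List.getElem?_reverse h2, if_pos (by omega)]
      congr 1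
      omega
    · rw [List.getElem?_eq_none (by simpa using h2), if_neg (by omega)]
  · by_cases h2 : 2 * i + 1 < w.length
    · rw [List.getElem?_reverse h2, if_pos (by omega)]
      congr 1
      omega
    · rw [List.getElem?_eq_none (by simpa using h2), if_neg (by omega)]

theorem revCAT_conf (w : List Bool) (t : ℕ) :
    CATconf revCAT w t =
      (fun i : Fin w.length => revState w t i, fun i : Fin w.length => revRegister w t i) := by
  refine CATconf_eq_of_step revCAT w (fun t i => revState w t i) (fun t i => revRegister w t i)
    (fun i => ?_) (fun i => ?_) (fun t i => ?_) (fun t i => ?_) t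
  · simp [revCAT, revState]
  · simp [revRegister]
  · rw [revCAT_δ]
  · rw [revCAT_δ]
    have hi := i.isLt
    by_cases hn : w.length ≤ t + i
    · simp [revRegister, hn, show w.length ≤ t + 1 + i by omega]
    · by_cases hn' : w.length ≤ t + 1 + i
      · simp only [revRegister, hn, hn', if_true, if_false, Option.none_or]
        rw [revOut_eq_of_signal w t i (by omega)]
      · simp [revRegister, hn, hn']

theorem revCAT_register_of_le (w : List Bool) (t : ℕ) (ht : w.length ≤ t) :
    (CATconf revCAT w t).2 = fun i : Fin w.length => some (revOut w i) := by
  funext i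
  simp [revCAT_conf, revRegister, show w.length ≤ t + i by omega]

theorem flatten_ofFn_revOut (w : List Bool) :
    (List.ofFn fun i : Fin w.length => revOut w i).flatten = w.reverse := by
  unfold revOut
  rw [← List.length_reverse (as := w), List.flatten_ofFn_pairs,
    List.take_of_length_le (by omega)]

theorem revCAT_outputsBy_iff (w v : List Bool) (t : ℕ) :
    CATOutputsBy revCAT w v t ↔ w.length ≤ t ∧ v = w.reverse := by
  constructor
  · rintro ⟨hsome, rfl⟩
    have ht : w.length ≤ t := by
      by_contra h
      simpa [revCAT_conf, revRegister, h] using hsome ⟨0, by omega⟩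
    refine ⟨ht, ?_⟩
    simp only [revCAT_register_of_le w t ht, Option.getD_some, flatten_ofFn_revOut]
  · rintro ⟨ht, rfl⟩
    simp only [CATOutputsBy, revCAT_register_of_le w t ht, Option.isSome_some, Option.getD_some,
      flatten_ofFn_revOut, implies_true, and_self]

theorem revCAT_acceptsBy_iff (w : List Bool) (t : ℕ) : CATAcceptsBy revCAT w t ↔ w ≠ [] :=
  ⟨fun ⟨_, _, hw, _⟩ => List.ne_nil_of_length_pos hw,
    fun hw => ⟨0, Nat.zero_le t, List.length_pos_iff.mpr hw, Set.mem_univ _⟩⟩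

theorem revCAT_transduction :
    CATTransduction revCAT = {p | ∃ w : List Bool, w ≠ [] ∧ p = (w, w.reverse)} := by
  ext ⟨w, v⟩
  simp only [CATTransduction, Set.mem_ofPred_eq, revCAT_acceptsBy_iff, revCAT_outputsBy_iff,
    Prod.mk.injEq]
  constructor
  · rintro ⟨⟨_, hw⟩, _, _, rfl⟩
    exact ⟨w, hw, rfl, rfl⟩
  · rintro ⟨w, hw, rfl, rfl⟩
    exact ⟨⟨0, hw⟩, w.length, le_rfl, rfl⟩

theorem revCAT_timeBounded : CATTimeBounded revCAT id id := by
  rintro p hp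
  rw [revCAT_transduction] at hp
  obtain ⟨w, hw, rfl⟩ := hp
  exact ⟨(revCAT_acceptsBy_iff w _).2 hw, (revCAT_outputsBy_iff w _ _).2 ⟨le_rfl, rfl⟩⟩

/-- Transductions are considered up to the empty input word, which a cellular array cannot hold;
the alphabet `{a,b}` is modelled by `Bool`. -/
theorem reversal_transduction_in_CAT_rt_rt :
    {p : List Bool × List Bool | ∃ w : List Bool, w ≠ [] ∧ p = (w, w.reverse)} ∈
      CATT Bool Bool rtC rtC :=
  ⟨revCAT, id, id, rfl, rfl, revCAT_transduction.symm, revCAT_timeBounded⟩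
end
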